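/- arXiv:1506.05451 — 10 statements merged into one kernel-verified Lean document; each statement's English description precedes it below -/
import Mathlib

section
/- If f is an unbounded modulus function and A ⊆ ℕ has f-density zero, then the complement ℕ \ A has f-density one. -/
open Filter Finset Topology
open scoped Classical

def IsModulus (f : ℝ → ℝ) : Prop :=
  (∀ x, 0 ≤ x → 0 ≤ f x) ∧
  (∀ x, 0 ≤ x → (f x = 0 ↔ x = 0)) ∧
  (∀ x, 0 ≤ x → ∀ y, 0 ≤ y → f (x + y) ≤ f x + f y) ∧
  (∀ x y, 0 ≤ x → x ≤ y → f x ≤ f y) ∧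
  ContinuousWithinAt f (Set.Ici 0) 0

def IsUnboundedModulus (f : ℝ → ℝ) : Prop :=
  IsModulus f ∧ ∀ M : ℝ, ∃ x, 0 ≤ x ∧ M < f x

def MemLambda (l : ℕ → ℝ) : Prop :=
  l 1 = 1 ∧ Monotone l ∧ (∀ n, l (n + 1) ≤ l n + 1) ∧ (∀ n, 0 < l n) ∧
  Tendsto l atTop atTop

noncomputable def Iseg (l : ℕ → ℝ) (n : ℕ) : Finset ℕ :=
  (Finset.Icc 1 n).filter (fun t => (n : ℝ) - l n + 1 ≤ (t : ℝ))

def FLStatConv {X : Type*} [NormedAddCommGroup X] (f : ℝ → ℝ) (l : ℕ → ℝ)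
    (x : ℕ → X) (L : X) : Prop :=
  ∀ ξ : ℝ, 0 < ξ →
    Tendsto (fun n => f (((Iseg l n).filter (fun t => ξ ≤ ‖x t - L‖)).card) / f (l n))
      atTop (nhds 0)

def FLDensityZero (f : ℝ → ℝ) (l : ℕ → ℝ) (T : Set ℕ) : Prop :=
  Tendsto (fun n => f (((Iseg l n).filter (fun t => t ∈ T)).card) / f (l n))
    atTop (nhds 0)

def FStatConv {X : Type*} [NormedAddCommGroup X] (f : ℝ → ℝ)
    (x : ℕ → X) (L : X) : Prop :=
  ∀ ξ : ℝ, 0 < ξ →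
    Tendsto (fun u => f (((Finset.Icc 1 u).filter (fun t => ξ ≤ ‖x t - L‖)).card) / f (u : ℝ))
      atTop (nhds 0)

/-
By subadditivity, `f u ≤ f |A(u)| + f |Aᶜ(u)|` since the two counts add up to `u`, and by
monotonicity `f |Aᶜ(u)| ≤ f u`. As a modulus vanishes only at `0`, `f u > 0` for `u ≥ 1`,
and dividing by it squeezes the ratio for `Aᶜ` between
`1 - f |A(u)| / f u` and `1`.
-/

namespace IsModulus

variable {f : ℝ → ℝ}

theorem pos (hf : IsModulus f) {x : ℝ} (hx : 0 < x) : 0 < f x :=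
  (hf.1 x hx.le).lt_of_ne fun h => hx.ne' ((hf.2.1 x hx.le).1 h.symm)

theorem one_sub_div_le_div_add (hf : IsModulus f) {a b : ℝ} (ha : 0 ≤ a) (hb : 0 ≤ b)
    (hab : 0 < a + b) : 1 - f a / f (a + b) ≤ f b / f (a + b) := by
  have hpos := hf.pos hab
  rw [sub_le_iff_le_add, ← add_div, le_div_iff₀ hpos, one_mul]
  exact (hf.2.2.1 a ha b hb).trans_eq (add_comm _ _)

theorem div_add_le_one (hf : IsModulus f) {a b : ℝ} (ha : 0 ≤ a) (hb : 0 ≤ b)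
    (hab : 0 < a + b) : f b / f (a + b) ≤ 1 :=
  div_le_one_of_le₀ (hf.2.2.2.1 b (a + b) hb (le_add_of_nonneg_left ha)) (hf.pos hab).le

theorem tendsto_div_one_of_tendsto_div_zero (hf : IsModulus f) {a b N : ℕ → ℝ}
    (ha : ∀ u, 0 ≤ a u) (hb : ∀ u, 0 ≤ b u) (hN : ∀ u, a u + b u = N u)
    (hNpos : ∀ᶠ u in atTop, 0 < N u)
    (h : Tendsto (fun u => f (a u) / f (N u)) atTop (𝓝 0)) :
    Tendsto (fun u => f (b u) / f (N u)) atTop (𝓝 1) := by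
  have hlower : Tendsto (fun u => 1 - f (a u) / f (N u)) atTop (𝓝 1) := by
    simpa using tendsto_const_nhds.sub h
  refine tendsto_of_tendsto_of_tendsto_of_le_of_le' hlower tendsto_const_nhds ?_ ?_
  · filter_upwards [hNpos] with u hu
    rw [← hN] at hu ⊢
    exact hf.one_sub_div_le_div_add (ha u) (hb u) hu
  · filter_upwards [hNpos] with u hu
    rw [← hN] at hu ⊢
    exact hf.div_add_le_one (ha u) (hb u) hu

end IsModulus

theorem card_filter_mem_add_card_filter_mem_compl (A : Set ℕ) (u : ℕ) :
    ((Icc 1 u).filter (· ∈ A)).card + ((Icc 1 u).filter (· ∈ Aᶜ)).card = u := by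
  simpa using card_filter_add_card_filter_not (s := Icc 1 u) (· ∈ A)

theorem stmt0 (f : ℝ → ℝ) (hf : IsUnboundedModulus f) (A : Set ℕ)
    (h : Tendsto (fun u => f (((Finset.Icc 1 u).filter (fun t => t ∈ A)).card) / f (u : ℝ))
      atTop (nhds 0)) :
    Tendsto (fun u => f (((Finset.Icc 1 u).filter (fun t => t ∈ Aᶜ)).card) / f (u : ℝ))
      atTop (nhds 1) := by
  refine hf.1.tendsto_div_one_of_tendsto_div_zero (fun _ => Nat.cast_nonneg _)
    (fun _ => Nat.cast_nonneg _) (fun u => ?_) ?_ h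
  · exact_mod_cast card_filter_mem_add_card_filter_mem_compl A u
  · filter_upwards [eventually_ge_atTop 1] with u hu
    exact_mod_cast hu
end

section
/- Let f be an unbounded modulus such that there is c > 0 with f(xy) ≥ c·f(x)·f(y) for all x,y ≥ 0, and such that lim_{u→∞} f(u)/u > 0. Let λ = (λ_n) ∈ Λ and I_n = [n−λ_n+1, n]. If a real sequence (x_t) is strongly λ-summable to L (i.e. lim_n (1/λ_n) Σ_{t∈I_n} |x_t − L| = 0), then (x_t) is f_λ-statistically convergent to L, i.e. for every ξ > 0, lim_n f(|{t ∈ I_n : |x_t − L| ≥ ξ}|)/f(λ_n) = 0. -/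
/-!
Markov's inequality bounds the number `K n` of indices in `I_n` with `|x_t - L| ≥ ξ` by
`ξ⁻¹ ∑_{t ∈ I_n} |x_t - L|`, so strong summability gives `K n / λ_n → 0`. Hence for every `A > 0`
eventually `A · K n ≤ λ_n`, and supermultiplicativity with monotonicity give
`c f(A) f(K n) ≤ f(A K n) ≤ f(λ_n)`. Since `f` is unbounded, `f(A)` can be taken as large as we
like, so `f(K n) / f(λ_n) → 0`.
-/

open Filter Finset Topology
open scoped Classical

theorem Finset.mul_card_filter_le_sum {ι R : Type*} [Semiring R] [PartialOrder R]
    [IsOrderedRing R] (s : Finset ι) (g : ι → R) (hg : ∀ i ∈ s, 0 ≤ g i) (ξ : R) :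
    ξ * #(s.filter fun i => ξ ≤ g i) ≤ ∑ i ∈ s, g i :=
  calc ξ * #(s.filter fun i => ξ ≤ g i)
      = #(s.filter fun i => ξ ≤ g i) • ξ := (nsmul_eq_mul' _ _).symm
    _ ≤ ∑ i ∈ s.filter fun i => ξ ≤ g i, g i :=
      card_nsmul_le_sum _ _ _ fun _ hi => (mem_filter.1 hi).2
    _ ≤ ∑ i ∈ s, g i :=
      sum_le_sum_of_subset_of_nonneg (filter_subset _ _) fun i hi _ => hg i hi

theorem eventually_mul_le_of_tendsto_div_zero {α : Type*} {F : Filter α} {a b : α → ℝ}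
    (hb : ∀ i, 0 < b i) (hab : Tendsto (fun i => a i / b i) F (𝓝 0)) {A : ℝ} (hA : 0 < A) :
    ∀ᶠ i in F, A * a i ≤ b i := by
  filter_upwards [(tendsto_order.1 hab).2 A⁻¹ (inv_pos.2 hA)] with i hi
  rw [div_lt_iff₀ (hb i)] at hi
  nlinarith [mul_inv_cancel₀ hA.ne', hb i]

theorem IsModulus.pos_s2 {f : ℝ → ℝ} (hf : IsModulus f) {x : ℝ} (hx : 0 < x) : 0 < f x :=
  (hf.1 x hx.le).lt_of_ne fun h => hx.ne' ((hf.2.1 x hx.le).1 h.symm)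

theorem IsUnboundedModulus.tendsto_div_of_tendsto_div {f : ℝ → ℝ} (hf : IsUnboundedModulus f)
    {c : ℝ} (hc : 0 < c) (hmul : ∀ x, 0 ≤ x → ∀ y, 0 ≤ y → c * (f x * f y) ≤ f (x * y))
    {α : Type*} {F : Filter α} {a b : α → ℝ} (ha : ∀ i, 0 ≤ a i) (hb : ∀ i, 0 < b i)
    (hab : Tendsto (fun i => a i / b i) F (𝓝 0)) :
    Tendsto (fun i => f (a i) / f (b i)) F (𝓝 0) := by
  have hfb : ∀ i, 0 < f (b i) := fun i => hf.1.pos_s2 (hb i)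
  obtain ⟨⟨hf0, -, -, hmono, -⟩, hunb⟩ := hf
  refine tendsto_order.2 ⟨fun ε hε => Eventually.of_forall fun i =>
    hε.trans_le (div_nonneg (hf0 _ (ha i)) (hfb i).le), fun ε hε => ?_⟩
  obtain ⟨A₀, hA₀, hfA₀⟩ := hunb (1 / (c * ε))
  -- enlarge `A₀` to make it positive without decreasing `f A₀`
  set A := max A₀ 1
  have hfA : 1 / (c * ε) < f A := hfA₀.trans_le (hmono _ _ hA₀ (le_max_left _ _))
  have hfA_pos : 0 < f A := lt_of_le_of_lt (by positivity) hfA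
  filter_upwards [eventually_mul_le_of_tendsto_div_zero hb hab
    (lt_of_lt_of_le one_pos (le_max_right A₀ 1))] with i hi
  have hsuper : c * f A * f (a i) ≤ f (b i) := by
    rw [mul_assoc]
    exact (hmul A (by positivity) (a i) (ha i)).trans
      (hmono _ _ (mul_nonneg (by positivity) (ha i)) hi)
  have hfA_large : 1 / (c * f A) < ε := by
    rw [div_lt_iff₀ (by positivity)] at hfA ⊢
    linarith
  refine lt_of_le_of_lt ?_ hfA_large
  rw [div_le_div_iff₀ (hfb i) (by positivity)]
  linarith

theorem stmt2_general (f : ℝ → ℝ) (hf : IsUnboundedModulus f)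
    (c : ℝ) (hc : 0 < c) (hmul : ∀ x, 0 ≤ x → ∀ y, 0 ≤ y → c * (f x * f y) ≤ f (x * y))
    (l : ℕ → ℝ) (hl : MemLambda l) (x : ℕ → ℝ) (L : ℝ)
    (hsum : Tendsto (fun n => (1 / l n) * ∑ t ∈ Iseg l n, |x t - L|) atTop (nhds 0)) :
    FLStatConv f l x L := by
  intro ξ hξ
  set K : ℕ → ℝ := fun n => #((Iseg l n).filter fun t => ξ ≤ ‖x t - L‖)
  have hlpos : ∀ n, 0 < l n := hl.2.2.2.1
  have hK_le : ∀ n, K n / l n ≤ ξ⁻¹ * ((1 / l n) * ∑ t ∈ Iseg l n, |x t - L|) := fun n => by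
    have hmarkov : ξ * K n ≤ ∑ t ∈ Iseg l n, ‖x t - L‖ :=
      (Iseg l n).mul_card_filter_le_sum _ (fun _ _ => norm_nonneg _) ξ
    calc K n / l n = ξ⁻¹ * (ξ * K n) / l n := by field_simp
      _ ≤ ξ⁻¹ * (∑ t ∈ Iseg l n, ‖x t - L‖) / l n :=
        div_le_div_of_nonneg_right (by gcongr) (hlpos n).le
      _ = ξ⁻¹ * ((1 / l n) * ∑ t ∈ Iseg l n, |x t - L|) := by
        simp only [Real.norm_eq_abs]
        ring
  have hdensity : Tendsto (fun n => K n / l n) atTop (𝓝 0) :=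
    squeeze_zero (fun n => div_nonneg (Nat.cast_nonneg _) (hlpos n).le) hK_le
      (by simpa using hsum.const_mul ξ⁻¹)
  exact hf.tendsto_div_of_tendsto_div hc hmul (fun _ => Nat.cast_nonneg _) hlpos hdensity

theorem stmt2 (f : ℝ → ℝ) (hf : IsUnboundedModulus f)
    (c : ℝ) (hc : 0 < c) (hmul : ∀ x, 0 ≤ x → ∀ y, 0 ≤ y → c * (f x * f y) ≤ f (x * y))
    (hlim : ∃ p : ℝ, 0 < p ∧ Tendsto (fun u : ℝ => f u / u) atTop (nhds p))
    (l : ℕ → ℝ) (hl : MemLambda l) (x : ℕ → ℝ) (L : ℝ)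
    (hsum : Tendsto (fun n => (1 / l n) * ∑ t ∈ Iseg l n, |x t - L|) atTop (nhds 0)) :
    FLStatConv f l x L :=
  stmt2_general f hf c hc hmul l hl x L hsum
end

section
/- Let f be an unbounded modulus and λ ∈ Λ. If a sequence (x_t) in a normed space X is f_λ-statistically convergent to L, then there exist sequences (y_t), (z_t) with x_t = y_t + z_t for all t, y_t → L in norm, and lim_n f(|{t ∈ I_n : z_t ≠ 0}|)/f(λ_n) = 0. Moreover if (x_t) is bounded then (y_t) and (z_t) are bounded. -/
open Filter Finset Topology
open scoped Classical

/-!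
Apply the diagonal argument to the thresholds `ξ = 1/(k+1)`: there is an index `K n → ∞`,
monotone in `n`, such that eventually the `f_λ`-density ratio of `{t ∈ I_n : ε n ≤ ‖x t - L‖}`
is below `ε n := 1/(K n + 1)`. Keep `x t` where `‖x t - L‖ < ε t` and replace it by `L`
elsewhere. Since `ε` is antitone, every `t ∈ I_n` where the two differ has `ε n ≤ ‖x t - L‖`.
-/

theorem exists_monotone_tendsto_atTop_eventually {P : ℕ → ℕ → Prop}
    (h : ∀ k, ∀ᶠ n in atTop, P k n) :
    ∃ K : ℕ → ℕ, Monotone K ∧ Tendsto K atTop atTop ∧ ∀ᶠ n in atTop, P (K n) n := by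
  obtain ⟨φ, hφ, hφP⟩ :=
    extraction_forall_of_eventually fun k => eventually_forall_ge_atTop.2 (h k)
  refine ⟨fun n => Nat.findGreatest (fun k => φ k ≤ n) n, ?_, ?_, ?_⟩
  · exact fun a b hab => Nat.findGreatest_mono (fun _ hk => hk.trans hab) hab
  · exact tendsto_atTop_atTop.2 fun b =>
      ⟨φ b, fun n hn => Nat.le_findGreatest (hφ.le_apply.trans hn) hn⟩
  · filter_upwards [eventually_ge_atTop (φ 0)] with n hn
    exact hφP _ n (Nat.findGreatest_spec (P := fun k => φ k ≤ n) (Nat.zero_le n) hn)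

theorem le_of_mem_Iseg {l : ℕ → ℝ} {n t : ℕ} (ht : t ∈ Iseg l n) : t ≤ n :=
  (Finset.mem_Icc.1 (Finset.mem_filter.1 ht).1).2

section Decomposition

variable {X : Type*} [NormedAddCommGroup X] {f : ℝ → ℝ} {l : ℕ → ℝ} {x : ℕ → X} {L : X}

theorem FLStatConv.exists_antitone_threshold (hconv : FLStatConv f l x L) :
    ∃ ε : ℕ → ℝ, Antitone ε ∧ (∀ n, 0 ≤ ε n) ∧ Tendsto ε atTop (𝓝 0) ∧
      ∀ᶠ n in atTop, f #{t ∈ Iseg l n | ε n ≤ ‖x t - L‖} / f (l n) < ε n := by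
  have hk : ∀ k : ℕ, (0 : ℝ) < 1 / (k + 1) := fun k => Nat.one_div_pos_of_nat
  obtain ⟨K, hKmono, hKtop, hK⟩ := exists_monotone_tendsto_atTop_eventually fun k =>
    (hconv _ (hk k)).eventually (gt_mem_nhds (hk k))
  refine ⟨fun n => 1 / (K n + 1), fun a b hab => ?_, fun n => (hk (K n)).le,
    tendsto_one_div_add_atTop_nhds_zero_nat.comp hKtop, hK⟩
  exact one_div_le_one_div_of_le (by positivity) (by exact_mod_cast Nat.succ_le_succ (hKmono hab))

variable (x L) in
noncomputable def nearPart (ε : ℕ → ℝ) (t : ℕ) : X :=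
  if ‖x t - L‖ < ε t then x t else L

variable {ε : ℕ → ℝ}

theorem norm_nearPart_sub_le (hε : ∀ t, 0 ≤ ε t) (t : ℕ) : ‖nearPart x L ε t - L‖ ≤ ε t := by
  unfold nearPart
  split_ifs with h
  · exact h.le
  · simpa using hε t

theorem tendsto_nearPart (hε : ∀ t, 0 ≤ ε t) (hε0 : Tendsto ε atTop (𝓝 0)) :
    Tendsto (nearPart x L ε) atTop (𝓝 L) :=
  tendsto_iff_norm_sub_tendsto_zero.2 <|
    squeeze_zero (fun _ => norm_nonneg _) (norm_nearPart_sub_le hε) hε0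

theorem norm_nearPart_le {M : ℝ} (hM : ∀ t, ‖x t‖ ≤ M) (t : ℕ) :
    ‖nearPart x L ε t‖ ≤ max M ‖L‖ := by
  unfold nearPart
  split_ifs
  · exact (hM t).trans (le_max_left _ _)
  · exact le_max_right _ _

theorem le_norm_sub_of_sub_nearPart_ne_zero (hε : Antitone ε) {n t : ℕ} (htn : t ≤ n)
    (ht : x t - nearPart x L ε t ≠ 0) : ε n ≤ ‖x t - L‖ := by
  unfold nearPart at ht
  split_ifs at ht with h
  · exact absurd (sub_self _) ht
  · exact (hε htn).trans (not_lt.1 h)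

theorem flDensityZero_sub_nearPart (hf : IsModulus f) (hl : ∀ n, 0 ≤ l n) (hε : Antitone ε)
    (hε0 : Tendsto ε atTop (𝓝 0))
    (hdens : ∀ᶠ n in atTop, f #{t ∈ Iseg l n | ε n ≤ ‖x t - L‖} / f (l n) < ε n) :
    FLDensityZero f l {t | x t - nearPart x L ε t ≠ 0} := by
  obtain ⟨hf0, -, -, hfmono, -⟩ := hf
  refine tendsto_of_tendsto_of_tendsto_of_le_of_le' tendsto_const_nhds hε0
    (Eventually.of_forall fun n => div_nonneg (hf0 _ (Nat.cast_nonneg _)) (hf0 _ (hl n))) ?_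
  filter_upwards [hdens] with n hn
  refine le_trans (div_le_div_of_nonneg_right ?_ (hf0 _ (hl n))) hn.le
  refine hfmono _ _ (Nat.cast_nonneg _) (Nat.cast_le.2 (card_le_card fun t ht => ?_))
  simp only [mem_filter] at ht ⊢
  exact ⟨ht.1, le_norm_sub_of_sub_nearPart_ne_zero hε (le_of_mem_Iseg ht.1) ht.2⟩

end Decomposition

theorem stmt4_general {X : Type*} [NormedAddCommGroup X]
    (f : ℝ → ℝ) (hf : IsUnboundedModulus f)
    (l : ℕ → ℝ) (hl : MemLambda l) (x : ℕ → X) (L : X)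
    (hconv : FLStatConv f l x L) :
    ∃ y z : ℕ → X, (∀ t, x t = y t + z t) ∧
      Tendsto y atTop (nhds L) ∧
      FLDensityZero f l {t | z t ≠ 0} ∧
      ((∃ M : ℝ, ∀ t, ‖x t‖ ≤ M) →
        (∃ M : ℝ, ∀ t, ‖y t‖ ≤ M) ∧ (∃ M : ℝ, ∀ t, ‖z t‖ ≤ M)) := by
  obtain ⟨ε, hεanti, hε, hε0, hdens⟩ := hconv.exists_antitone_threshold
  refine ⟨nearPart x L ε, fun t => x t - nearPart x L ε t, fun t => (add_sub_cancel _ _).symm,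
    tendsto_nearPart hε hε0,
    flDensityZero_sub_nearPart hf.1 (fun n => (hl.2.2.2.1 n).le) hεanti hε0 hdens, ?_⟩
  rintro ⟨M, hM⟩
  exact ⟨⟨_, norm_nearPart_le hM⟩, ⟨M + max M ‖L‖, fun t =>
    (norm_sub_le _ _).trans (add_le_add (hM t) (norm_nearPart_le hM t))⟩⟩

theorem stmt4 {X : Type*} [NormedAddCommGroup X] [NormedSpace ℝ X]
    (f : ℝ → ℝ) (hf : IsUnboundedModulus f)
    (l : ℕ → ℝ) (hl : MemLambda l) (x : ℕ → X) (L : X)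
    (hconv : FLStatConv f l x L) :
    ∃ y z : ℕ → X, (∀ t, x t = y t + z t) ∧
      Tendsto y atTop (nhds L) ∧
      FLDensityZero f l {t | z t ≠ 0} ∧
      ((∃ M : ℝ, ∀ t, ‖x t‖ ≤ M) →
        (∃ M : ℝ, ∀ t, ‖y t‖ ≤ M) ∧ (∃ M : ℝ, ∀ t, ‖z t‖ ≤ M)) :=
  stmt4_general f hf l hl x L hconv
end

section
/- Let f be an unbounded modulus, λ ∈ Λ, and (x_t) a sequence in a normed space X. If (x_t) is f_λ-statistically convergent to x, then there exists T ⊆ ℕ with f_λ-density zero such that the subsequence of (x_t) along ℕ\T converges to x in norm. -/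
/-!
Choose a diagonal index `k n → ∞`, monotone in `n`, along which the densities of the sets
`A j = {t | 1/(j+1) ≤ ‖x_t - x‖}` still tend to zero, and let `T = {t | t ∈ A (k t)}`.
Since `k` and `A` are monotone, `T ∩ [1, n] ⊆ A (k n)`, so `T` has density zero, while off `T`
we have `‖x_t - x‖ < 1/(k t + 1) → 0`.
-/

open Filter Finset Topology
open scoped Classical

theorem exists_monotone_tendsto_diagonal {α : Type*} [PseudoMetricSpace α] {u : ℕ → ℕ → α}
    {a : α} (hu : ∀ j, Tendsto (u j) atTop (𝓝 a)) :
    ∃ k : ℕ → ℕ, Monotone k ∧ Tendsto k atTop atTop ∧ Tendsto (fun n => u (k n) n) atTop (𝓝 a) := by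
  have hN : ∀ j, ∃ N, ∀ n ≥ N, dist (u j n) a < 1 / (j + 1 : ℝ) := fun j =>
    Metric.tendsto_atTop.1 (hu j) _ Nat.one_div_pos_of_nat
  choose N hN using hN
  set k : ℕ → ℕ := fun n => Nat.findGreatest (fun j => N j ≤ n) n
  have hk_mono : Monotone k := fun m n hmn =>
    Nat.findGreatest_mono (fun _ hj => hj.trans hmn) hmn
  have hk_top : Tendsto k atTop atTop := tendsto_atTop_atTop.2 fun j =>
    ⟨max j (N j), fun n hn => Nat.le_findGreatest (le_of_max_le_left hn) (le_of_max_le_right hn)⟩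
  refine ⟨k, hk_mono, hk_top, tendsto_iff_dist_tendsto_zero.2 ?_⟩
  refine squeeze_zero' (.of_forall fun _ => dist_nonneg) ?_
    (tendsto_one_div_add_atTop_nhds_zero_nat.comp hk_top)
  filter_upwards [eventually_ge_atTop (N 0)] with n hn
  exact (hN _ _ (Nat.findGreatest_spec (P := fun j => N j ≤ n) (Nat.zero_le n) hn)).le

theorem exists_tendsto_zero_forall_eventually_notMem {ρ : Set ℕ → ℕ → ℝ}
    (hρ_nonneg : ∀ S n, 0 ≤ ρ S n)
    (hρ_mono : ∀ S S' n, (∀ t ≤ n, t ∈ S → t ∈ S') → ρ S n ≤ ρ S' n)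
    {A : ℕ → Set ℕ} (hA : Monotone A) (hAρ : ∀ j, Tendsto (ρ (A j)) atTop (𝓝 0)) :
    ∃ T : Set ℕ, Tendsto (ρ T) atTop (𝓝 0) ∧ ∀ j, ∀ᶠ t in atTop ⊓ 𝓟 Tᶜ, t ∉ A j := by
  obtain ⟨k, hk_mono, hk_top, hk⟩ := exists_monotone_tendsto_diagonal hAρ
  refine ⟨{t | t ∈ A (k t)}, squeeze_zero (hρ_nonneg _) (fun n => ?_) hk, fun j => ?_⟩
  · exact hρ_mono _ _ n fun t htn ht => hA (hk_mono htn) ht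
  · rw [eventually_inf_principal]
    filter_upwards [hk_top.eventually_ge_atTop j] with t hjt htT hAj
    exact htT (hA hjt hAj)

-- `FLDensityZero f l T` is definitionally `Tendsto (flDensity f l T) atTop (𝓝 0)`.
noncomputable def flDensity (f : ℝ → ℝ) (l : ℕ → ℝ) (S : Set ℕ) (n : ℕ) : ℝ :=
  f #{t ∈ Iseg l n | t ∈ S} / f (l n)

section flDensity

variable {f : ℝ → ℝ} {l : ℕ → ℝ}

theorem flDensity_nonneg (hf : IsModulus f) (hl : ∀ n, 0 ≤ l n) (S : Set ℕ) (n : ℕ) :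
    0 ≤ flDensity f l S n :=
  div_nonneg (hf.1 _ (Nat.cast_nonneg _)) (hf.1 _ (hl n))

theorem flDensity_mono (hf : IsModulus f) (hl : ∀ n, 0 ≤ l n) {S S' : Set ℕ} {n : ℕ}
    (h : ∀ t ≤ n, t ∈ S → t ∈ S') : flDensity f l S n ≤ flDensity f l S' n := by
  have hsub : {t ∈ Iseg l n | t ∈ S} ⊆ {t ∈ Iseg l n | t ∈ S'} := by
    intro t ht
    obtain ⟨ht, htS⟩ := mem_filter.1 ht
    exact mem_filter.2 ⟨ht, h t (mem_Icc.1 (mem_filter.1 ht).1).2 htS⟩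
  exact div_le_div_of_nonneg_right
    (hf.2.2.2.1 _ _ (Nat.cast_nonneg _) (Nat.cast_le.2 (card_le_card hsub))) (hf.1 _ (hl n))

theorem FLStatConv.tendsto_flDensity {X : Type*} [NormedAddCommGroup X] {xs : ℕ → X} {x : X}
    (hconv : FLStatConv f l xs x) {ξ : ℝ} (hξ : 0 < ξ) :
    Tendsto (flDensity f l {t | ξ ≤ ‖xs t - x‖}) atTop (𝓝 0) := by
  convert hconv ξ hξ using 2 with n
  simp only [flDensity, Set.mem_ofPred_eq]

end flDensity

theorem stmt7_general {X : Type*} [NormedAddCommGroup X]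
    (f : ℝ → ℝ) (hf : IsUnboundedModulus f)
    (l : ℕ → ℝ) (hl : MemLambda l) (xs : ℕ → X) (x : X)
    (hconv : FLStatConv f l xs x) :
    ∃ T : Set ℕ, FLDensityZero f l T ∧
      Tendsto xs (atTop ⊓ Filter.principal Tᶜ) (nhds x) := by
  have hl_nonneg : ∀ n, 0 ≤ l n := fun n => (hl.2.2.2.1 n).le
  have hA : Monotone fun j : ℕ => {t | 1 / (j + 1 : ℝ) ≤ ‖xs t - x‖} := by
    intro i j hij t ht
    have hij' : 1 / (j + 1 : ℝ) ≤ 1 / (i + 1) := by gcongr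
    exact hij'.trans ht
  obtain ⟨T, hT, hTc⟩ := exists_tendsto_zero_forall_eventually_notMem
    (flDensity_nonneg hf.1 hl_nonneg) (fun _ _ _ => flDensity_mono hf.1 hl_nonneg) hA
    fun j => hconv.tendsto_flDensity Nat.one_div_pos_of_nat
  refine ⟨T, hT, Metric.tendsto_nhds.2 fun ε hε => ?_⟩
  obtain ⟨j, hj⟩ := exists_nat_one_div_lt hε
  filter_upwards [hTc j] with t ht
  rw [dist_eq_norm]
  exact (not_le.1 ht).trans hj

theorem stmt7 {X : Type*} [NormedAddCommGroup X] [NormedSpace ℝ X]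
    (f : ℝ → ℝ) (hf : IsUnboundedModulus f)
    (l : ℕ → ℝ) (hl : MemLambda l) (xs : ℕ → X) (x : X)
    (hconv : FLStatConv f l xs x) :
    ∃ T : Set ℕ, FLDensityZero f l T ∧
      Tendsto xs (atTop ⊓ Filter.principal Tᶜ) (nhds x) :=
  stmt7_general f hf l hl xs x hconv
end

section
/- Let X be a Banach space, f an unbounded modulus, λ ∈ Λ. Every f_λ-statistically Cauchy sequence in X is f_λ-statistically convergent (to some limit in X). -/
open Filter Finset Topology
open scoped Classical

/-!
Sets of `f_λ`-density zero form an ideal of subsets of `ℕ`, and a proper one: since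
`λ_n ≤ |I_n| + 1`, subadditivity gives `f(λ_n) ≤ f(|I_n|) + f(1)`, so for unbounded `f` the
whole of `ℕ` does not have density zero. The complements of density-zero sets thus form a
non-trivial filter on `ℕ`. Convergence along this filter is exactly `f_λ`-statistical
convergence, and the `f_λ`-statistical Cauchy condition says that the image of the filter
under the sequence contains balls of every radius, i.e. is a Cauchy filter. In a complete
space it converges.
-/

theorem Metric.cauchy_of_forall_ball_mem {X : Type*} [PseudoMetricSpace X] {G : Filter X}
    [G.NeBot] (h : ∀ ε > 0, ∃ c, Metric.ball c ε ∈ G) : Cauchy G := by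
  refine Metric.cauchy_iff.2 ⟨‹_›, fun ε hε => ?_⟩
  obtain ⟨c, hc⟩ := h (ε / 2) (half_pos hε)
  refine ⟨_, hc, fun x hx y hy => ?_⟩
  calc dist x y ≤ dist x c + dist y c := dist_triangle_right x y c
    _ < ε / 2 + ε / 2 := add_lt_add hx hy
    _ = ε := add_halves ε

namespace IsModulus

variable {f : ℝ → ℝ}

theorem map_zero (hf : IsModulus f) : f 0 = 0 :=
  (hf.2.1 0 le_rfl).2 rfl

end IsModulus

namespace MemLambda

variable {l : ℕ → ℝ}

theorem le_self (hl : MemLambda l) {n : ℕ} (hn : 1 ≤ n) : l n ≤ n := by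
  induction n, hn using Nat.le_induction with
  | base => simp [hl.1]
  | succ n _ ih =>
    push_cast
    linarith [hl.2.2.1 n]

/-- `Iseg l n` contains the last `⌊l n⌋₊` integers up to `n`. -/
theorem le_card_Iseg_add_one (hl : MemLambda l) {n : ℕ} (hn : 1 ≤ n) :
    l n ≤ #(Iseg l n) + 1 := by
  set b := ⌊l n⌋₊
  have hl0 : 0 ≤ l n := (hl.2.2.2.1 n).le
  have hbn : b ≤ n := Nat.floor_le_of_le (hl.le_self hn)
  have hsub : Icc (n + 1 - b) n ⊆ Iseg l n := by
    intro t ht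
    rw [mem_Icc] at ht
    have htb : (n : ℝ) + 1 ≤ t + b := by exact_mod_cast (by omega : n + 1 ≤ t + b)
    simp only [Iseg, mem_filter, mem_Icc]
    exact ⟨⟨by omega, ht.2⟩, by linarith [Nat.floor_le hl0]⟩
  calc l n ≤ b + 1 := (Nat.lt_floor_add_one (l n)).le
    _ ≤ #(Iseg l n) + 1 := by
      gcongr
      have := card_le_card hsub
      rw [Nat.card_Icc] at this
      exact_mod_cast (by omega : b ≤ #(Iseg l n))

end MemLambda

namespace FLDensityZero

variable {f : ℝ → ℝ} {l : ℕ → ℝ} {S T : Set ℕ}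

theorem empty (hf : IsModulus f) : FLDensityZero f l ∅ := by
  simp [FLDensityZero, hf.map_zero]

theorem mono (hf : IsModulus f) (hl : MemLambda l) (hST : S ⊆ T) (hT : FLDensityZero f l T) :
    FLDensityZero f l S := by
  have hfl : ∀ n, 0 ≤ f (l n) := fun n => hf.1 _ (hl.2.2.2.1 n).le
  refine squeeze_zero (fun n => div_nonneg (hf.1 _ (Nat.cast_nonneg _)) (hfl n))
    (fun n => div_le_div_of_nonneg_right ?_ (hfl n)) hT
  exact hf.2.2.2.1 _ _ (Nat.cast_nonneg _) <| Nat.cast_le.2 <|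
    card_le_card <| monotone_filter_right _ fun t _ ht => hST ht

theorem union (hf : IsModulus f) (hl : MemLambda l) (hS : FLDensityZero f l S)
    (hT : FLDensityZero f l T) : FLDensityZero f l (S ∪ T) := by
  have hfl : ∀ n, 0 ≤ f (l n) := fun n => hf.1 _ (hl.2.2.2.1 n).le
  refine squeeze_zero (fun n => div_nonneg (hf.1 _ (Nat.cast_nonneg _)) (hfl n))
    (fun n => ?_) (by simpa using hS.add hT)
  rw [← add_div]
  refine div_le_div_of_nonneg_right ?_ (hfl n)
  calc _ ≤ f (#((Iseg l n).filter (· ∈ S)) + #((Iseg l n).filter (· ∈ T)) : ℕ) := by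
        refine hf.2.2.2.1 _ _ (Nat.cast_nonneg _) (Nat.cast_le.2 ?_)
        refine (card_le_card fun t ht => ?_).trans (card_union_le _ _)
        simpa [and_or_left] using ht
    _ ≤ _ := by
      push_cast
      exact hf.2.2.1 _ (Nat.cast_nonneg _) _ (Nat.cast_nonneg _)

end FLDensityZero

theorem not_flDensityZero_univ {f : ℝ → ℝ} {l : ℕ → ℝ} (hf : IsUnboundedModulus f)
    (hl : MemLambda l) : ¬ FLDensityZero f l Set.univ := by
  intro h
  have hfl : Tendsto (fun n => f (l n)) atTop atTop := tendsto_atTop.2 fun M => by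
    obtain ⟨x, hx, hM⟩ := hf.2 M
    filter_upwards [hl.2.2.2.2.eventually_ge_atTop x] with n hn
    exact hM.le.trans (hf.1.2.2.2.1 _ _ hx hn)
  have hbound : ∀ᶠ n in atTop, 1 ≤ f #(Iseg l n) / f (l n) + f 1 / f (l n) := by
    filter_upwards [eventually_ge_atTop 1] with n hn
    rw [← add_div, le_div_iff₀ (hf.1.pos (hl.2.2.2.1 n)), one_mul]
    calc f (l n) ≤ f (#(Iseg l n) + 1) :=
          hf.1.2.2.2.1 _ _ (hl.2.2.2.1 n).le (hl.le_card_Iseg_add_one hn)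
      _ ≤ _ := hf.1.2.2.1 _ (Nat.cast_nonneg _) _ zero_le_one
  have hlim : Tendsto (fun n => f #(Iseg l n) / f (l n) + f 1 / f (l n)) atTop (𝓝 0) := by
    simpa [FLDensityZero] using h.add (tendsto_const_nhds.div_atTop hfl)
  exact zero_lt_one.not_ge (ge_of_tendsto hlim hbound)

section StatFilter

variable {f : ℝ → ℝ} {l : ℕ → ℝ}

def flStatFilter (hf : IsModulus f) (hl : MemLambda l) : Filter ℕ :=
  comk (FLDensityZero f l) (.empty hf) (fun _ hT _ hST => hT.mono hf hl hST)
    fun _ hS _ hT => hS.union hf hl hT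

theorem flStatFilter_neBot (hf : IsUnboundedModulus f) (hl : MemLambda l) :
    (flStatFilter hf.1 hl).NeBot :=
  ⟨fun h => not_flDensityZero_univ hf hl <| by
    simpa [flStatFilter] using empty_mem_iff_bot.2 h⟩

variable {X : Type*} [NormedAddCommGroup X] (hf : IsModulus f) (hl : MemLambda l)

theorem preimage_ball_mem_flStatFilter {x : ℕ → X} {c : X} {ξ : ℝ} :
    x ⁻¹' Metric.ball c ξ ∈ flStatFilter hf hl ↔ FLDensityZero f l {t | ξ ≤ ‖x t - c‖} := by
  rw [flStatFilter, mem_comk]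
  congr!
  ext t
  simp [dist_eq_norm]

theorem flStatConv_iff_tendsto {x : ℕ → X} {L : X} :
    FLStatConv f l x L ↔ Tendsto x (flStatFilter hf hl) (𝓝 L) := by
  rw [Metric.tendsto_nhds]
  exact forall₂_congr fun _ _ => (preimage_ball_mem_flStatFilter hf hl).symm

end StatFilter

theorem stmt10_general {X : Type*} [NormedAddCommGroup X] [CompleteSpace X]
    (f : ℝ → ℝ) (hf : IsUnboundedModulus f)
    (l : ℕ → ℝ) (hl : MemLambda l) (xs : ℕ → X)
    (hcauchy : ∀ ξ : ℝ, 0 < ξ → ∃ Q : ℕ, FLDensityZero f l {t | ξ ≤ ‖xs t - xs Q‖}) :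
    ∃ x : X, FLStatConv f l xs x := by
  have := flStatFilter_neBot hf hl
  have hC : Cauchy (map xs (flStatFilter hf.1 hl)) := by
    refine Metric.cauchy_of_forall_ball_mem fun ξ hξ => ?_
    obtain ⟨Q, hQ⟩ := hcauchy ξ hξ
    exact ⟨xs Q, (preimage_ball_mem_flStatFilter hf.1 hl).2 hQ⟩
  obtain ⟨L, hL⟩ := CompleteSpace.complete hC
  exact ⟨L, (flStatConv_iff_tendsto hf.1 hl).2 hL⟩

theorem stmt10 {X : Type*} [NormedAddCommGroup X] [NormedSpace ℝ X] [CompleteSpace X]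
    (f : ℝ → ℝ) (hf : IsUnboundedModulus f)
    (l : ℕ → ℝ) (hl : MemLambda l) (xs : ℕ → X)
    (hcauchy : ∀ ξ : ℝ, 0 < ξ → ∃ Q : ℕ, FLDensityZero f l {t | ξ ≤ ‖xs t - xs Q‖}) :
    ∃ x : X, FLStatConv f l xs x :=
  stmt10_general f hf l hl xs hcauchy
end

section
/- Let f be an unbounded modulus and λ ∈ Λ with liminf_{n→∞} n/f(λ_n) > 0, and suppose lim_{n→∞} f(n)/n > 0. Then every f_λ-statistically convergent sequence (x_t) of reals (with limit L) is f-statistically convergent to L, i.e. lim_n f(|{t ≤ n : |x_t − L| ≥ ξ}|)/f(n) = 0 for every ξ > 0. -/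
/-!
Since `f u / u → p > 0`, `f` lies between two affine functions of positive slope, so for
`b n → ∞` the ratio `f (a n) / f (b n)` tends to `0` exactly when `a n / b n` does. This reduces
the claim to densities: `[1, u]` is covered by the window `I_u` and `[1, u - ⌊λ_u⌋]`, so iterating
splits `[1, u]` into windows `I_n` with at least `λ_n / 2` points each, and a density below `ε`
in every late window gives density at most `2ε + o(1)` on `[1, u]`.
-/

open Filter Finset Topology
open scoped Classical

theorem MemLambda.one_le {l : ℕ → ℝ} (hl : MemLambda l) {n : ℕ} (hn : 1 ≤ n) : 1 ≤ l n :=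
  hl.1 ▸ hl.2.1 hn

theorem MemLambda.le_self_s11 {l : ℕ → ℝ} (hl : MemLambda l) {n : ℕ} (hn : 1 ≤ n) : l n ≤ n := by
  induction n, hn using Nat.le_induction with
  | base => simp [hl.1]
  | succ n _ ih => push_cast; linarith [hl.2.2.1 n]

theorem exists_affine_bounds_of_tendsto_div {f : ℝ → ℝ} {p : ℝ}
    (hnn : ∀ x, 0 ≤ x → 0 ≤ f x) (hmono : ∀ x y, 0 ≤ x → x ≤ y → f x ≤ f y) (hp : 0 < p)
    (hlim : Tendsto (fun u => f u / u) atTop (𝓝 p)) :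
    ∃ M, ∀ a, 0 ≤ a → p / 2 * a - M ≤ f a ∧ f a ≤ 2 * p * a + M := by
  obtain ⟨N, hN⟩ := eventually_atTop.1 <|
    (hlim.eventually (Ioo_mem_nhds (half_lt_self hp) (by linarith : p < 2 * p))).and
      (eventually_gt_atTop 0)
  have hlinear : ∀ a, N ≤ a → p / 2 * a < f a ∧ f a < 2 * p * a := fun a ha => by
    obtain ⟨⟨hlo, hhi⟩, ha0⟩ := hN a ha
    exact ⟨(lt_div_iff₀ ha0).1 hlo, (div_lt_iff₀ ha0).1 hhi⟩
  have hN0 : 0 < N := (hN N le_rfl).2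
  refine ⟨2 * p * N, fun a ha => ?_⟩
  rcases le_or_gt N a with hNa | haN
  · obtain ⟨hlo, hhi⟩ := hlinear a hNa
    constructor <;> nlinarith
  · have hfN := (hlinear N le_rfl).2
    constructor
    · nlinarith [hnn a ha]
    · linarith [hmono a N ha haN.le, (by positivity : 0 ≤ 2 * p * a)]

section AffinelyBounded

variable {α : Type*} {F : Filter α} {f : ℝ → ℝ} {c C M : ℝ} {a b : α → ℝ}

theorem tendsto_div_of_tendsto_apply_div (hc : 0 < c)
    (hf : ∀ x, 0 ≤ x → c * x - M ≤ f x ∧ f x ≤ C * x + M)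
    (ha : ∀ i, 0 ≤ a i) (hb : Tendsto b F atTop)
    (h : Tendsto (fun i => f (a i) / f (b i)) F (𝓝 0)) :
    Tendsto (fun i => a i / b i) F (𝓝 0) := by
  have hMb : Tendsto (fun i => M / b i) F (𝓝 0) := tendsto_const_nhds.div_atTop hb
  have hbound : Tendsto (fun i => (M / b i + |f (a i) / f (b i)| * (C + M / b i)) / c)
      F (𝓝 0) := by
    simpa using (hMb.add (h.abs.mul (tendsto_const_nhds.add hMb))).div_const c
  refine tendsto_of_tendsto_of_tendsto_of_le_of_le' tendsto_const_nhds hbound ?_ ?_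
  · filter_upwards [hb.eventually_gt_atTop 0] with i hi using div_nonneg (ha i) hi.le
  filter_upwards [hb.eventually_gt_atTop 0, hb.eventually_gt_atTop (M / c)] with i hi hMc
  have hfb : 0 < f (b i) := by
    rw [div_lt_iff₀ hc] at hMc
    linarith [(hf _ hi.le).1]
  have hfa : f (a i) ≤ |f (a i) / f (b i)| * (C * b i + M) :=
    calc f (a i) = f (a i) / f (b i) * f (b i) := by field_simp
      _ ≤ |f (a i) / f (b i)| * f (b i) := by gcongr; exact le_abs_self _
      _ ≤ |f (a i) / f (b i)| * (C * b i + M) := by gcongr; exact (hf _ hi.le).2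
  have hrhs : (M / b i + |f (a i) / f (b i)| * (C + M / b i)) * b i
      = M + |f (a i) / f (b i)| * (C * b i + M) := by field_simp
  rw [div_le_div_iff₀ hi hc, hrhs]
  linarith [(hf _ (ha i)).1]

theorem tendsto_apply_div_of_tendsto_div (hc : 0 < c) (hnn : ∀ x, 0 ≤ x → 0 ≤ f x)
    (hf : ∀ x, 0 ≤ x → c * x - M ≤ f x ∧ f x ≤ C * x + M)
    (ha : ∀ i, 0 ≤ a i) (hb : Tendsto b F atTop)
    (h : Tendsto (fun i => a i / b i) F (𝓝 0)) :
    Tendsto (fun i => f (a i) / f (b i)) F (𝓝 0) := by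
  have hMb : Tendsto (fun i => M / b i) F (𝓝 0) := tendsto_const_nhds.div_atTop hb
  have hbound : Tendsto (fun i => (C * (a i / b i) + M / b i) / (c - M / b i)) F (𝓝 0) := by
    have := ((h.const_mul C).add hMb).div (tendsto_const_nhds.sub hMb) (by simpa using hc.ne')
    rwa [mul_zero, add_zero, sub_zero, zero_div] at this
  refine tendsto_of_tendsto_of_tendsto_of_le_of_le' tendsto_const_nhds hbound ?_ ?_
  · filter_upwards [hb.eventually_gt_atTop 0] with i hi
      using div_nonneg (hnn _ (ha i)) (hnn _ hi.le)
  filter_upwards [hb.eventually_gt_atTop 0, hb.eventually_gt_atTop (M / c)] with i hi hMc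
  have hcbM : 0 < c * b i - M := by rw [div_lt_iff₀ hc] at hMc; linarith
  have hrhs : (C * (a i / b i) + M / b i) / (c - M / b i) = (C * a i + M) / (c * b i - M) := by
    field_simp
  rw [hrhs]
  exact div_le_div₀ (by linarith [hnn _ (ha i), (hf _ (ha i)).2]) (hf _ (ha i)).2 hcbM
    (hf _ hi.le).1

end AffinelyBounded

theorem Icc_subset_Icc_union_Iseg {l : ℕ → ℝ} {u : ℕ} (hl : 0 ≤ l u) :
    Icc 1 u ⊆ Icc 1 (u - ⌊l u⌋₊) ∪ Iseg l u := by
  intro t ht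
  rw [mem_Icc] at ht
  by_cases htk : t ≤ u - ⌊l u⌋₊
  · exact mem_union_left _ (mem_Icc.2 ⟨ht.1, htk⟩)
  refine mem_union_right _ (mem_filter.2 ⟨mem_Icc.2 ht, ?_⟩)
  have hut : ((u + 1 : ℕ) : ℝ) ≤ t + ⌊l u⌋₊ := by exact_mod_cast (by omega : u + 1 ≤ t + ⌊l u⌋₊)
  push_cast at hut
  linarith [Nat.floor_le hl]

section Covering

variable (P : ℕ → Prop) [DecidablePred P] {l : ℕ → ℝ}

/-- Peel off the window `I_u`, which has `⌊λ_u⌋ ≥ λ_u / 2` points, and recurse below it. -/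
theorem card_filter_Icc_le_of_card_filter_Iseg_le (hl1 : ∀ n, 1 ≤ n → 1 ≤ l n)
    (hln : ∀ n, 1 ≤ n → l n ≤ n) {m : ℕ} {ε : ℝ} (hε : 0 ≤ ε)
    (hm : ∀ n, m ≤ n → (((Iseg l n).filter P).card : ℝ) ≤ ε * l n) (u : ℕ) :
    (((Icc 1 u).filter P).card : ℝ) ≤ m + 2 * ε * u := by
  induction u using Nat.strong_induction_on with
  | _ u ih =>
  rcases Nat.lt_or_ge u (max m 1) with hu | hu
  · have hcard : ((Icc 1 u).filter P).card ≤ m :=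
      (card_filter_le _ _).trans (by simp only [Nat.card_Icc]; omega)
    have : (0 : ℝ) ≤ 2 * ε * u := by positivity
    linarith [(Nat.cast_le (α := ℝ)).2 hcard]
  have hu1 : 1 ≤ u := le_of_max_le_right hu
  have hfloor1 : 1 ≤ ⌊l u⌋₊ := (Nat.one_le_floor_iff _).2 (hl1 u hu1)
  have hflooru : ⌊l u⌋₊ ≤ u := Nat.floor_le_of_le (hln u hu1)
  have hsplit : ((Icc 1 u).filter P).card ≤
      ((Icc 1 (u - ⌊l u⌋₊)).filter P).card + ((Iseg l u).filter P).card := by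
    refine (card_le_card ?_).trans (card_union_le _ _)
    rw [← filter_union]
    exact filter_subset_filter P (Icc_subset_Icc_union_Iseg (by linarith [hl1 u hu1]))
  have hhalf : l u ≤ 2 * ⌊l u⌋₊ := by
    have h1 : (1 : ℝ) ≤ ⌊l u⌋₊ := by exact_mod_cast hfloor1
    linarith [Nat.lt_floor_add_one (l u)]
  calc (((Icc 1 u).filter P).card : ℝ)
      ≤ ((Icc 1 (u - ⌊l u⌋₊)).filter P).card + ((Iseg l u).filter P).card := by
        exact_mod_cast hsplit
    _ ≤ (m + 2 * ε * (u - ⌊l u⌋₊ : ℕ)) + ε * l u :=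
        add_le_add (ih _ (by omega)) (hm u (le_of_max_le_left hu))
    _ ≤ m + 2 * ε * u := by
        rw [Nat.cast_sub hflooru]
        nlinarith [mul_le_mul_of_nonneg_left hhalf hε]

theorem tendsto_card_filter_Icc_div_of_tendsto_card_filter_Iseg_div
    (hl1 : ∀ n, 1 ≤ n → 1 ≤ l n) (hln : ∀ n, 1 ≤ n → l n ≤ n)
    (h : Tendsto (fun n => (((Iseg l n).filter P).card : ℝ) / l n) atTop (𝓝 0)) :
    Tendsto (fun n : ℕ => (((Icc 1 n).filter P).card : ℝ) / n) atTop (𝓝 0) := by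
  refine tendsto_order.2 ⟨fun e he => Eventually.of_forall fun n => he.trans_le (by positivity),
    fun ε hε => ?_⟩
  obtain ⟨m, hm⟩ := eventually_atTop.1 <|
    (h.eventually (gt_mem_nhds (by positivity : (0 : ℝ) < ε / 4))).and (eventually_ge_atTop 1)
  have hcount := card_filter_Icc_le_of_card_filter_Iseg_le P hl1 hln (by positivity : 0 ≤ ε / 4)
    fun n hn => ((div_lt_iff₀ (by linarith [hl1 n (hm n hn).2])).1 (hm n hn).1).le
  filter_upwards [(tendsto_const_div_atTop_nhds_zero_nat (m : ℝ)).eventually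
    (gt_mem_nhds (half_pos hε)), eventually_gt_atTop 0] with u hmu hu
  have hu' : (0 : ℝ) < u := by exact_mod_cast hu
  rw [div_lt_iff₀ hu'] at hmu ⊢
  linarith [hcount u]

end Covering

theorem stmt11_general (f : ℝ → ℝ) (hf : IsUnboundedModulus f)
    (l : ℕ → ℝ) (hl : MemLambda l)
    (hlim : ∃ p : ℝ, 0 < p ∧ Tendsto (fun u : ℝ => f u / u) atTop (nhds p))
    (x : ℕ → ℝ) (L : ℝ) (hconv : FLStatConv f l x L) :
    FStatConv f x L := by
  obtain ⟨⟨hnn, -, -, hmono, -⟩, -⟩ := hf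
  obtain ⟨p, hp, hfp⟩ := hlim
  obtain ⟨M, hM⟩ := exists_affine_bounds_of_tendsto_div hnn hmono hp hfp
  intro ξ hξ
  have hwindow := tendsto_div_of_tendsto_apply_div (half_pos hp) hM
    (fun _ => Nat.cast_nonneg _) hl.2.2.2.2 (hconv ξ hξ)
  have hinitial := tendsto_card_filter_Icc_div_of_tendsto_card_filter_Iseg_div _
    (fun _ => hl.one_le) (fun _ => hl.le_self_s11) hwindow
  exact tendsto_apply_div_of_tendsto_div (half_pos hp) hnn hM (fun _ => Nat.cast_nonneg _)
    tendsto_natCast_atTop_atTop hinitial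

theorem stmt11 (f : ℝ → ℝ) (hf : IsUnboundedModulus f)
    (l : ℕ → ℝ) (hl : MemLambda l)
    (hinf : 0 < Filter.atTop.liminf (fun n : ℕ => (n : ℝ) / f (l n)))
    (hlim : ∃ p : ℝ, 0 < p ∧ Tendsto (fun u : ℝ => f u / u) atTop (nhds p))
    (x : ℕ → ℝ) (L : ℝ) (hconv : FLStatConv f l x L) :
    FStatConv f x L :=
  stmt11_general f hf l hl hlim x L hconv
end

section
/- Let f be an unbounded modulus and λ ∈ Λ such that lim_{n→∞} f(n − λ_n + 1)/f(n) = 0 and lim_{n→∞} f(n)/f(λ_n) = 1. Then every f-statistically convergent real sequence is f_λ-statistically convergent to the same limit. -/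
/-! With `K = {t | ξ ≤ |x_t - L|}`: since `I_n ⊆ [1, n]` and `f` is increasing,
`f(|K ∩ I_n|) / f(λ_n) ≤ f(|K ∩ [1, n]|) / f(n) · f(n) / f(λ_n)`, a product of a null sequence
and a convergent one. -/

open Filter Finset Topology
open scoped Classical

namespace IsModulus

variable {f : ℝ → ℝ}

theorem nonneg (hf : IsModulus f) {x : ℝ} (hx : 0 ≤ x) : 0 ≤ f x :=
  hf.1 x hx

theorem mono (hf : IsModulus f) {x y : ℝ} (hx : 0 ≤ x) (hxy : x ≤ y) : f x ≤ f y :=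
  hf.2.2.2.1 x y hx hxy

end IsModulus

theorem filter_Iseg_subset (l : ℕ → ℝ) (n : ℕ) (p : ℕ → Prop) [DecidablePred p] :
    (Iseg l n).filter p ⊆ (Icc 1 n).filter p :=
  filter_subset_filter _ (filter_subset _ _)

theorem FStatConv.flStatConv_of_tendsto_ratio {X : Type*} [NormedAddCommGroup X]
    {f : ℝ → ℝ} (hf : IsModulus f) {l : ℕ → ℝ} (hl : ∀ n, 0 ≤ l n) {c : ℝ}
    (hratio : Tendsto (fun n : ℕ => f n / f (l n)) atTop (𝓝 c))
    {x : ℕ → X} {L : X} (hx : FStatConv f x L) : FLStatConv f l x L := by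
  intro ξ hξ
  have hbound := (hx ξ hξ).mul hratio
  rw [zero_mul] at hbound
  refine tendsto_of_tendsto_of_tendsto_of_le_of_le' tendsto_const_nhds hbound
    (Eventually.of_forall fun n => div_nonneg (hf.nonneg (Nat.cast_nonneg _)) (hf.nonneg (hl n)))
    ?_
  filter_upwards [eventually_ge_atTop 1] with n hn
  have hfn : f n ≠ 0 := (hf.pos (by exact_mod_cast hn)).ne'
  have hcard : (((Iseg l n).filter (fun t => ξ ≤ ‖x t - L‖)).card : ℝ) ≤
      ((Icc 1 n).filter (fun t => ξ ≤ ‖x t - L‖)).card := by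
    exact_mod_cast card_le_card (filter_Iseg_subset l n _)
  calc f ((Iseg l n).filter (fun t => ξ ≤ ‖x t - L‖)).card / f (l n)
      ≤ f ((Icc 1 n).filter (fun t => ξ ≤ ‖x t - L‖)).card / f (l n) := by
        gcongr
        · exact hf.nonneg (hl n)
        · exact hf.mono (Nat.cast_nonneg _) hcard
    _ = f ((Icc 1 n).filter (fun t => ξ ≤ ‖x t - L‖)).card / f n * (f n / f (l n)) := by
        rw [div_mul_div_cancel₀ hfn]

theorem stmt12_general (f : ℝ → ℝ) (hf : IsUnboundedModulus f)
    (l : ℕ → ℝ) (hl : MemLambda l)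
    (h2 : Tendsto (fun n : ℕ => f (n : ℝ) / f (l n)) atTop (nhds 1))
    (x : ℕ → ℝ) (L : ℝ) (hconv : FStatConv f x L) :
    FLStatConv f l x L :=
  hconv.flStatConv_of_tendsto_ratio hf.1 (fun n => (hl.2.2.2.1 n).le) h2

theorem stmt12 (f : ℝ → ℝ) (hf : IsUnboundedModulus f)
    (l : ℕ → ℝ) (hl : MemLambda l)
    (h1 : Tendsto (fun n : ℕ => f ((n : ℝ) - l n + 1) / f (n : ℝ)) atTop (nhds 0))
    (h2 : Tendsto (fun n : ℕ => f (n : ℝ) / f (l n)) atTop (nhds 1))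
    (x : ℕ → ℝ) (L : ℝ) (hconv : FStatConv f x L) :
    FLStatConv f l x L :=
  stmt12_general f hf l hl h2 x L hconv
end

section
/- Let f be an unbounded modulus and λ = (λ_n), μ = (μ_n) ∈ Λ with λ_n ≤ μ_n for all n ≥ n_0. If liminf_{n→∞} f(λ_n)/f(μ_n) > 0, then every sequence that is f_μ-statistically convergent to L is f_λ-statistically convergent to L; i.e. S_{f_μ} ⊆ S_{f_λ}. -/
open Filter Finset Topology
open scoped Classical

theorem MemLambda.pos {l : ℕ → ℝ} (hl : MemLambda l) (n : ℕ) : 0 < l n := hl.2.2.2.1 n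

theorem Iseg_subset_Iseg {l m : ℕ → ℝ} {n : ℕ} (h : l n ≤ m n) : Iseg l n ⊆ Iseg m n := by
  intro t ht
  simp only [Iseg, Finset.mem_filter] at ht ⊢
  exact ⟨ht.1, by linarith [ht.2]⟩

-- With `c` the liminf, eventually `c / 2 < p / q`, hence `a / p ≤ b / p ≤ (2 / c) * (b / q)`.
theorem tendsto_div_zero_of_le_of_liminf_div_pos {α : Type*} {F : Filter α} {a b p q : α → ℝ}
    (ha : ∀ i, 0 ≤ a i) (hp : ∀ i, 0 < p i) (hq : ∀ i, 0 < q i) (hab : ∀ᶠ i in F, a i ≤ b i)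
    (hpq : 0 < F.liminf (fun i => p i / q i)) (hb : Tendsto (fun i => b i / q i) F (𝓝 0)) :
    Tendsto (fun i => a i / p i) F (𝓝 0) := by
  set c := F.liminf (fun i => p i / q i)
  have hbdd : F.IsBoundedUnder (· ≥ ·) (fun i => p i / q i) :=
    isBoundedUnder_of ⟨0, fun i => (div_pos (hp i) (hq i)).le⟩
  have hratio : ∀ᶠ i in F, c / 2 < p i / q i :=
    eventually_lt_of_lt_liminf (half_lt_self hpq) hbdd
  have hlim : Tendsto (fun i => 2 / c * (b i / q i)) F (𝓝 0) := by
    simpa using hb.const_mul (2 / c)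
  refine tendsto_of_tendsto_of_tendsto_of_le_of_le' tendsto_const_nhds hlim
    (Eventually.of_forall fun i => div_nonneg (ha i) (hp i).le) ?_
  filter_upwards [hratio, hab] with i hi hai
  have hcq : c * q i < 2 * p i := by
    rw [lt_div_iff₀ (hq i)] at hi
    linarith
  calc a i / p i ≤ b i / p i := div_le_div_of_nonneg_right hai (hp i).le
    _ ≤ 2 / c * (b i / q i) := by
      rw [div_mul_div_comm, div_le_div_iff₀ (hp i) (mul_pos hpq (hq i))]
      have hb_nonneg : 0 ≤ b i := (ha i).trans hai
      nlinarith

theorem stmt13 (f : ℝ → ℝ) (hf : IsUnboundedModulus f)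
    (l m : ℕ → ℝ) (hl : MemLambda l) (hm : MemLambda m)
    (n0 : ℕ) (hle : ∀ n ≥ n0, l n ≤ m n)
    (hinf : 0 < Filter.atTop.liminf (fun n : ℕ => f (l n) / f (m n)))
    (x : ℕ → ℝ) (L : ℝ) (hconv : FLStatConv f m x L) :
    FLStatConv f l x L := by
  have hmod := hf.1
  intro ξ hξ
  refine tendsto_div_zero_of_le_of_liminf_div_pos (fun _ => hmod.nonneg (Nat.cast_nonneg _))
    (fun n => hmod.pos (hl.pos n)) (fun n => hmod.pos (hm.pos n)) ?_ hinf (hconv ξ hξ)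
  filter_upwards [eventually_ge_atTop n0] with n hn
  exact hmod.mono (Nat.cast_nonneg _) (Nat.cast_le.mpr
    (card_le_card (filter_subset_filter _ (Iseg_subset_Iseg (hle n hn)))))
end

section
/- Let f be an unbounded modulus and λ, μ ∈ Λ with λ_n ≤ μ_n for all n ≥ n_0 and lim_{n→∞} f(μ_n)/f(λ_n) = 1 and lim_{n→∞} f(μ_n − λ_n)/f(μ_n) = 0. Then every f_λ-statistically convergent sequence is f_μ-statistically convergent to the same limit, i.e. S_{f_λ} ⊆ S_{f_μ}. -/
open Filter Finset Topology
open scoped Classical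

/-!
The window `J_n` of `μ` is the window `I_n` of `λ` plus at most `μ_n - λ_n + 1` further points,
so monotonicity and subadditivity of `f` give, for any property `P`,
`f |{t ∈ J_n : P t}| ≤ f |{t ∈ I_n : P t}| + f (μ_n - λ_n) + f 1`.
After dividing by `f (μ_n)`, the first term is `(f |{t ∈ I_n : P t}| / f (λ_n)) · (f (λ_n) / f (μ_n))
→ 0 · 1`, the second tends to `0` by hypothesis, and the third tends to `0` because
`f (μ_n) → ∞`, `f` being monotone and unbounded.
-/

theorem Finset.filter_subset_filter_union_sdiff {α : Type*} [DecidableEq α] (s t : Finset α)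
    (P : α → Prop) [DecidablePred P] : s.filter P ⊆ t.filter P ∪ (s \ t) := by
  intro a ha
  simp only [mem_filter, mem_union, mem_sdiff] at ha ⊢
  tauto

theorem card_le_sub_add_one_of_forall_mem_Ico {s : Finset ℕ} {a b : ℝ} (hab : a ≤ b)
    (hs : ∀ t ∈ s, a ≤ t ∧ (t : ℝ) < b) : (#s : ℝ) ≤ b - a + 1 := by
  have hsub : s ⊆ Ico ⌈a⌉₊ ⌈b⌉₊ := fun t ht =>
    mem_Ico.mpr ⟨Nat.ceil_le.mpr (hs t ht).1, Nat.lt_ceil.mpr (hs t ht).2⟩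
  have hcard : #s ≤ ⌈b⌉₊ - ⌈a⌉₊ := (card_le_card hsub).trans (Nat.card_Ico _ _).le
  rcases le_or_gt ⌈b⌉₊ ⌈a⌉₊ with hba | hlt
  · have : #s = 0 := by omega
    rw [this, Nat.cast_zero]
    linarith
  · have hb : 0 ≤ b := by
      by_contra! hb
      simp [Nat.ceil_eq_zero.mpr hb.le] at hlt
    have hcard' : (#s : ℝ) ≤ ⌈b⌉₊ - ⌈a⌉₊ := by
      exact_mod_cast (Nat.cast_le.mpr hcard).trans (Nat.cast_sub hlt.le).le
    linarith [Nat.ceil_lt_add_one hb, Nat.le_ceil a]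

theorem card_Iseg_sdiff_le {l m : ℕ → ℝ} {n : ℕ} (h : l n ≤ m n) :
    (#(Iseg m n \ Iseg l n) : ℝ) ≤ m n - l n + 1 := by
  have key := card_le_sub_add_one_of_forall_mem_Ico (s := Iseg m n \ Iseg l n)
    (a := n - m n + 1) (b := n - l n + 1) (by linarith) fun t ht => by
      rw [Finset.mem_sdiff, Iseg, Iseg, mem_filter, mem_filter, not_and, not_le] at ht
      exact ⟨ht.1.2, ht.2 ht.1.1⟩
  linarith

namespace IsModulus

variable {f : ℝ → ℝ}

theorem add_le (hf : IsModulus f) {x y : ℝ} (hx : 0 ≤ x) (hy : 0 ≤ y) :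
    f (x + y) ≤ f x + f y :=
  hf.2.2.1 x hx y hy

theorem le_add_of_le (hf : IsModulus f) {x y z : ℝ} (hx : 0 ≤ x) (hy : 0 ≤ y) (hz : 0 ≤ z)
    (h : z ≤ x + y) : f z ≤ f x + f y :=
  (hf.mono hz h).trans (hf.add_le hx hy)

theorem apply_card_filter_Iseg_le (hf : IsModulus f) {l m : ℕ → ℝ} {n : ℕ} (h : l n ≤ m n)
    (P : ℕ → Prop) [DecidablePred P] :
    f #((Iseg m n).filter P) ≤ f #((Iseg l n).filter P) + f (m n - l n) + f 1 := by
  have hD : f #(Iseg m n \ Iseg l n) ≤ f (m n - l n) + f 1 :=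
    hf.le_add_of_le (by linarith) zero_le_one (Nat.cast_nonneg _) (card_Iseg_sdiff_le h)
  have hA : f #((Iseg m n).filter P) ≤ f #((Iseg l n).filter P) + f #(Iseg m n \ Iseg l n) :=
    hf.le_add_of_le (Nat.cast_nonneg _) (Nat.cast_nonneg _) (Nat.cast_nonneg _) <| by
      exact_mod_cast (card_le_card (filter_subset_filter_union_sdiff _ _ P)).trans
        (card_union_le _ _)
  linarith

end IsModulus

theorem IsUnboundedModulus.tendsto_atTop {f : ℝ → ℝ} (hf : IsUnboundedModulus f) :
    Tendsto f atTop atTop := by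
  refine tendsto_atTop_atTop.mpr fun M => ?_
  obtain ⟨x, hx, hMx⟩ := hf.2 M
  exact ⟨x, fun y hy => hMx.le.trans (hf.1.mono hx hy)⟩

theorem tendsto_card_filter_Iseg_div_of_le {f : ℝ → ℝ} (hf : IsUnboundedModulus f)
    {l m : ℕ → ℝ} (hm : Tendsto m atTop atTop) (hle : ∀ᶠ n in atTop, l n ≤ m n)
    (h1 : Tendsto (fun n => f (m n) / f (l n)) atTop (𝓝 1))
    (h2 : Tendsto (fun n => f (m n - l n) / f (m n)) atTop (𝓝 0))
    (P : ℕ → Prop) [DecidablePred P]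
    (hP : Tendsto (fun n => f #((Iseg l n).filter P) / f (l n)) atTop (𝓝 0)) :
    Tendsto (fun n => f #((Iseg m n).filter P) / f (m n)) atTop (𝓝 0) := by
  have hfm : Tendsto (fun n => f (m n)) atTop atTop := hf.tendsto_atTop.comp hm
  have hlm : Tendsto (fun n => f (l n) / f (m n)) atTop (𝓝 1) := by
    simpa only [inv_div, inv_one] using h1.inv₀ one_ne_zero
  have hl0 : ∀ᶠ n in atTop, f (l n) ≠ 0 :=
    (h1.eventually_ne one_ne_zero).mono fun n hn h0 => hn (by rw [h0, div_zero])
  have hup : Tendsto (fun n => f #((Iseg l n).filter P) / f (l n) * (f (l n) / f (m n))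
      + f (m n - l n) / f (m n) + f 1 / f (m n)) atTop (𝓝 0) := by
    simpa using ((hP.mul hlm).add h2).add (tendsto_const_nhds.div_atTop hfm)
  refine tendsto_of_tendsto_of_tendsto_of_le_of_le' tendsto_const_nhds hup ?_ ?_
  · filter_upwards [hfm.eventually_gt_atTop 0] with n hn
    exact div_nonneg (hf.1.nonneg (Nat.cast_nonneg _)) hn.le
  · filter_upwards [hle, hl0, hfm.eventually_gt_atTop 0] with n hn hl0 hm0
    calc f #((Iseg m n).filter P) / f (m n)
        ≤ (f #((Iseg l n).filter P) + f (m n - l n) + f 1) / f (m n) :=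
          div_le_div_of_nonneg_right (hf.1.apply_card_filter_Iseg_le hn P) hm0.le
      _ = _ := by field_simp

theorem stmt14_general (f : ℝ → ℝ) (hf : IsUnboundedModulus f)
    (l m : ℕ → ℝ) (hm : MemLambda m)
    (n0 : ℕ) (hle : ∀ n ≥ n0, l n ≤ m n)
    (h1 : Tendsto (fun n : ℕ => f (m n) / f (l n)) atTop (nhds 1))
    (h2 : Tendsto (fun n : ℕ => f (m n - l n) / f (m n)) atTop (nhds 0))
    (x : ℕ → ℝ) (L : ℝ) (hconv : FLStatConv f l x L) :
    FLStatConv f m x L := fun ξ hξ =>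
  tendsto_card_filter_Iseg_div_of_le hf hm.2.2.2.2 (eventually_atTop.mpr ⟨n0, hle⟩) h1 h2 _
    (hconv ξ hξ)

theorem stmt14 (f : ℝ → ℝ) (hf : IsUnboundedModulus f)
    (l m : ℕ → ℝ) (hl : MemLambda l) (hm : MemLambda m)
    (n0 : ℕ) (hle : ∀ n ≥ n0, l n ≤ m n)
    (h1 : Tendsto (fun n : ℕ => f (m n) / f (l n)) atTop (nhds 1))
    (h2 : Tendsto (fun n : ℕ => f (m n - l n) / f (m n)) atTop (nhds 0))
    (x : ℕ → ℝ) (L : ℝ) (hconv : FLStatConv f l x L) :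
    FLStatConv f m x L :=
  stmt14_general f hf l m hm n0 hle h1 h2 x L hconv
end

section
/- Let X be a normed space and (x_t) a sequence in X. If for every unbounded modulus f the f-statistical limit of (x_t) exists, then all these limits coincide with a single x ∈ X and (x_t) converges to x in the norm topology. -/
open Filter Finset Topology
open scoped Classical

/-!
Taking `f = id` gives the statistical limit `L`. Every `f`-statistical limit is a statistical
limit (if `u ≤ k c` then `f u ≤ k f c`), and statistical limits are unique, so all the limits
are `L`. If `x_t` did not converge to `L`, the set of `t` with `‖x_t - L‖ ≥ ε` would be
infinite, with unbounded counting function `c`. Along a sequence `a_j` so sparse that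
`c (a_{j+1}) ≥ (j + 1) a_j`, the lower envelope `f` of the lines `x ↦ j + x / a_j` is an
unbounded modulus with `f (c (a_{j+1})) ≥ j` and `f (a_{j+1}) ≤ j + 2`, so `x_t` is not
`f`-statistically convergent to `L`.
-/

namespace IsModulus

variable {f : ℝ → ℝ}

theorem map_natCast_mul_le (hf : IsModulus f) (k : ℕ) {x : ℝ} (hx : 0 ≤ x) :
    f (k * x) ≤ k * f x := by
  obtain ⟨-, hf_zero, hf_add, -, -⟩ := hf
  induction k with
  | zero => simp [(hf_zero 0 le_rfl).2 rfl]
  | succ k ih =>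
    push_cast
    rw [add_mul, one_mul, add_mul, one_mul]
    exact (hf_add _ (by positivity) x hx).trans (by linarith)

theorem tendsto_div_of_tendsto_map_div (hf : IsModulus f) {c : ℕ → ℕ}
    (h : Tendsto (fun u : ℕ => f (c u) / f u) atTop (𝓝 0)) :
    Tendsto (fun u : ℕ => (c u : ℝ) / u) atTop (𝓝 0) := by
  refine tendsto_order.2
    ⟨fun ε hε => Eventually.of_forall fun u => hε.trans_le (by positivity), fun ε hε => ?_⟩
  obtain ⟨k, hk⟩ := exists_nat_gt ε⁻¹
  have hk0 : (0 : ℝ) < k := (inv_pos.2 hε).trans hk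
  filter_upwards [h.eventually (gt_mem_nhds (inv_pos.2 hk0)), eventually_ge_atTop 1]
    with u hsmall hu
  by_contra! hdense
  have hu0 : (0 : ℝ) < u := by exact_mod_cast hu
  have hcu : ε * u ≤ c u := by rwa [le_div_iff₀ hu0] at hdense
  have hu_le : (u : ℝ) ≤ k * c u :=
    calc (u : ℝ) = ε⁻¹ * (ε * u) := by field_simp
      _ ≤ k * c u := mul_le_mul hk.le hcu (by positivity) hk0.le
  have hfu : f u ≤ k * f (c u) :=
    (hf.2.2.2.1 _ _ hu0.le hu_le).trans (hf.map_natCast_mul_le k (by positivity))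
  rw [div_lt_iff₀ (hf.pos hu0)] at hsmall
  have : (k : ℝ)⁻¹ * f u ≤ f (c u) := by
    rw [inv_mul_le_iff₀ hk0]; exact hfu
  linarith

end IsModulus

theorem isUnboundedModulus_id : IsUnboundedModulus id :=
  ⟨⟨fun _ hx => hx, fun _ _ => Iff.rfl, fun _ _ _ _ => le_rfl, fun _ _ _ hxy => hxy,
    continuousWithinAt_id⟩,
    fun M => ⟨|M| + 1, by positivity, (le_abs_self M).trans_lt (lt_add_one _)⟩⟩

noncomputable def slowModulus (a : ℕ → ℝ) (x : ℝ) : ℝ :=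
  ⨅ j : ℕ, ((j : ℝ) + x / a j)

section slowModulus

variable {a : ℕ → ℝ} (ha : ∀ j, 0 < a j)
include ha

theorem slowModulus_le {x : ℝ} (hx : 0 ≤ x) (j : ℕ) : slowModulus a x ≤ j + x / a j :=
  ciInf_le ⟨0, by rintro _ ⟨i, rfl⟩; have := ha i; positivity⟩ j

theorem slowModulus_nonneg {x : ℝ} (hx : 0 ≤ x) : 0 ≤ slowModulus a x :=
  le_ciInf fun j => by have := ha j; positivity

theorem slowModulus_zero : slowModulus a 0 = 0 :=
  le_antisymm (by simpa using slowModulus_le ha le_rfl 0) (slowModulus_nonneg ha le_rfl)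

theorem min_le_slowModulus {x : ℝ} (hx : 0 ≤ x) : min 1 (x / a 0) ≤ slowModulus a x := by
  refine le_ciInf fun j => ?_
  cases j with
  | zero => simp
  | succ j =>
    have := ha (j + 1)
    exact (min_le_left _ _).trans (by push_cast; linarith [div_nonneg hx this.le,
      (Nat.cast_nonneg j : (0 : ℝ) ≤ j)])

theorem slowModulus_mono {x y : ℝ} (hx : 0 ≤ x) (hxy : x ≤ y) :
    slowModulus a x ≤ slowModulus a y :=
  le_ciInf fun j => (slowModulus_le ha hx j).trans (by have := ha j; gcongr)

theorem slowModulus_add_le {x y : ℝ} (hx : 0 ≤ x) (hy : 0 ≤ y) :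
    slowModulus a (x + y) ≤ slowModulus a x + slowModulus a y := by
  have key : ∀ i j : ℕ, slowModulus a (x + y) ≤ (i + x / a i) + (j + y / a j) := by
    intro i j
    -- the line with the larger `a` (smaller slope) already bounds `x + y`
    have hi : (0 : ℝ) ≤ i := Nat.cast_nonneg i
    have hj : (0 : ℝ) ≤ j := Nat.cast_nonneg j
    rcases le_total (a i) (a j) with h | h
    · have := div_le_div_of_nonneg_left hx (ha i) h
      have := slowModulus_le ha (add_nonneg hx hy) j
      rw [add_div] at this
      linarith
    · have := div_le_div_of_nonneg_left hy (ha j) h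
      have := slowModulus_le ha (add_nonneg hx hy) i
      rw [add_div] at this
      linarith
  have hx' : ∀ j : ℕ, slowModulus a (x + y) - (j + y / a j) ≤ slowModulus a x :=
    fun j => le_ciInf fun i => by linarith [key i j]
  have hy' : slowModulus a (x + y) - slowModulus a x ≤ slowModulus a y :=
    le_ciInf fun j => by linarith [hx' j]
  linarith

theorem natCast_le_slowModulus (hmono : Monotone a) {J : ℕ} {x : ℝ} (hx : J * a J ≤ x) :
    (J : ℝ) ≤ slowModulus a x := by
  have hx0 : 0 ≤ x := le_trans (by have := ha J; positivity) hx
  refine le_ciInf fun j => ?_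
  have hj : (0 : ℝ) ≤ j := Nat.cast_nonneg j
  rcases lt_or_ge j J with hjJ | hJj
  · have : (J : ℝ) ≤ x / a j := by
      rw [le_div_iff₀ (ha j)]
      exact (mul_le_mul_of_nonneg_left (hmono hjJ.le) (Nat.cast_nonneg J)).trans hx
    linarith
  · have : (J : ℝ) ≤ j := by exact_mod_cast hJj
    linarith [div_nonneg hx0 (ha j).le]

theorem isUnboundedModulus_slowModulus (hmono : Monotone a) :
    IsUnboundedModulus (slowModulus a) := by
  refine ⟨⟨fun x hx => slowModulus_nonneg ha hx, fun x hx => ⟨fun h0 => ?_, ?_⟩,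
    fun x hx y hy => slowModulus_add_le ha hx hy, fun x y hx hxy => slowModulus_mono ha hx hxy,
    ?_⟩, fun M => ?_⟩
  · by_contra hx0
    have := min_le_slowModulus ha hx
    have : 0 < min 1 (x / a 0) := lt_min one_pos (div_pos (hx.lt_of_ne' hx0) (ha 0))
    linarith
  · rintro rfl
    exact slowModulus_zero ha
  · rw [ContinuousWithinAt, slowModulus_zero ha]
    refine squeeze_zero' (eventually_mem_nhdsWithin.mono fun x hx => slowModulus_nonneg ha hx)
      (eventually_mem_nhdsWithin.mono fun x hx => by simpa using slowModulus_le ha hx 0) ?_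
    exact ((continuous_id.div_const (a 0)).tendsto' 0 0 (zero_div _)).mono_left
      nhdsWithin_le_nhds
  · have hJ := ha (⌊M⌋₊ + 1)
    refine ⟨(⌊M⌋₊ + 1 : ℕ) * a (⌊M⌋₊ + 1), by positivity, ?_⟩
    exact (Nat.lt_floor_add_one M).trans_le
      (by exact_mod_cast natCast_le_slowModulus ha hmono le_rfl)

end slowModulus

def sparseSeq (g : ℕ → ℕ) : ℕ → ℕ
  | 0 => 1
  | K + 1 => g ((K + 1) * sparseSeq g K)

theorem exists_isUnboundedModulus_not_tendsto {c : ℕ → ℕ} (hc : ∀ u, c u ≤ u)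
    (hunbdd : ∀ n, ∃ u, n ≤ c u) :
    ∃ f, IsUnboundedModulus f ∧ ¬Tendsto (fun u : ℕ => f (c u) / f u) atTop (𝓝 0) := by
  choose g hg using hunbdd
  set b := sparseSeq g
  have hb_succ : ∀ K, (K + 1) * b K ≤ b (K + 1) := fun K => (hg _).trans (hc _)
  have hb_pos : ∀ K, 0 < b K := by
    intro K
    induction K with
    | zero => exact one_pos
    | succ K ih => exact (Nat.mul_pos K.succ_pos ih).trans_le (hb_succ K)
  have hb_mono : Monotone b :=
    monotone_nat_of_le_succ fun K => (Nat.le_mul_of_pos_left _ K.succ_pos).trans (hb_succ K)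
  have hb_pos' : ∀ K, (0 : ℝ) < b K := fun K => by exact_mod_cast hb_pos K
  have hb_mono' : Monotone fun K => (b K : ℝ) := fun _ _ hij => Nat.cast_le.2 (hb_mono hij)
  set f := slowModulus fun K => (b K : ℝ)
  have hf := isUnboundedModulus_slowModulus hb_pos' hb_mono'
  refine ⟨f, hf, fun h => ?_⟩
  have hb_tendsto : Tendsto (fun K => b (K + 1)) atTop atTop :=
    tendsto_atTop_mono (fun K => (Nat.le_mul_of_pos_right _ (hb_pos K)).trans (hb_succ K))
      (tendsto_add_atTop_nat 1)
  have hbound : ∀ᶠ K in atTop, (1 : ℝ) / 3 ≤ f (c (b (K + 1))) / f (b (K + 1)) := by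
    filter_upwards [eventually_ge_atTop 1] with K hK
    have hK' : (1 : ℝ) ≤ K := by exact_mod_cast hK
    have hcount : (K : ℝ) * b K ≤ c (b (K + 1)) := by
      have : K * b K ≤ c (b (K + 1)) := (Nat.mul_le_mul_right _ K.le_succ).trans (hg _)
      exact_mod_cast this
    have hnum : (K : ℝ) ≤ f (c (b (K + 1))) := natCast_le_slowModulus hb_pos' hb_mono' hcount
    have hden : f (b (K + 1)) ≤ K + 2 := by
      have := slowModulus_le hb_pos' (hb_pos' (K + 1)).le (K + 1)
      rw [div_self (hb_pos' (K + 1)).ne'] at this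
      push_cast at this
      linarith
    rw [le_div_iff₀ (hf.1.pos (hb_pos' (K + 1)))]
    linarith
  have := ge_of_tendsto (h.comp hb_tendsto) hbound
  norm_num at this

theorem exists_isUnboundedModulus_not_tendsto_card {p : ℕ → Prop} [DecidablePred p]
    (hp : {t | p t}.Infinite) :
    ∃ f, IsUnboundedModulus f ∧
      ¬Tendsto (fun u : ℕ => f ((Icc 1 u).filter p).card / f u) atTop (𝓝 0) := by
  refine exists_isUnboundedModulus_not_tendsto
    (fun u => (card_filter_le _ _).trans (Nat.card_Icc 1 u).le) fun n => ?_
  obtain ⟨s, hs, rfl⟩ := (hp.sdiff (Set.finite_singleton 0)).exists_subset_card_eq n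
  refine ⟨s.sup id, card_le_card fun t ht => ?_⟩
  obtain ⟨hpt, ht0⟩ := hs ht
  simp only [mem_filter, mem_Icc]
  exact ⟨⟨Nat.one_le_iff_ne_zero.2 ht0, le_sup (f := id) ht⟩, hpt⟩

namespace FStatConv

variable {X : Type*} [NormedAddCommGroup X] {f : ℝ → ℝ} {xs : ℕ → X}

theorem to_id (hf : IsModulus f) {L : X} (h : FStatConv f xs L) : FStatConv id xs L :=
  fun ξ hξ => hf.tendsto_div_of_tendsto_map_div (h ξ hξ)

theorem unique (hf : IsModulus f) {L₁ L₂ : X} (h₁ : FStatConv f xs L₁)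
    (h₂ : FStatConv f xs L₂) : L₁ = L₂ := by
  by_contra hne
  set ξ := ‖L₁ - L₂‖ / 2 with hξ_def
  have hξ : 0 < ξ := half_pos (norm_pos_iff.2 (sub_ne_zero.2 hne))
  have hcover : ∀ t, ξ ≤ ‖xs t - L₁‖ ∨ ξ ≤ ‖xs t - L₂‖ := by
    intro t
    by_contra! h
    have := norm_sub_le_norm_sub_add_norm_sub L₁ (xs t) L₂
    rw [norm_sub_rev L₁ (xs t)] at this
    linarith [h.1, h.2]
  have hsum := (h₁ ξ hξ).add (h₂ ξ hξ)
  rw [add_zero] at hsum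
  refine absurd (ge_of_tendsto hsum ?_) (by norm_num : ¬(1 : ℝ) ≤ 0)
  filter_upwards [eventually_ge_atTop 1] with u hu
  set A := (Icc 1 u).filter fun t => ξ ≤ ‖xs t - L₁‖
  set B := (Icc 1 u).filter fun t => ξ ≤ ‖xs t - L₂‖
  have hcover_u : Icc 1 u ⊆ A ∪ B := fun t ht => by
    rcases hcover t with h | h
    · exact mem_union_left _ (mem_filter.2 ⟨ht, h⟩)
    · exact mem_union_right _ (mem_filter.2 ⟨ht, h⟩)
  have hcard : u ≤ A.card + B.card :=
    calc u = (Icc 1 u).card := by simp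
      _ ≤ (A ∪ B).card := card_le_card hcover_u
      _ ≤ A.card + B.card := card_union_le A B
  rw [← add_div, one_le_div (hf.pos (by exact_mod_cast hu))]
  calc f u ≤ f (A.card + B.card) := hf.2.2.2.1 _ _ (Nat.cast_nonneg u) (by exact_mod_cast hcard)
    _ ≤ f A.card + f B.card := hf.2.2.1 _ (Nat.cast_nonneg _) _ (Nat.cast_nonneg _)

theorem of_tendsto (hf : IsUnboundedModulus f) {L : X} (hx : Tendsto xs atTop (𝓝 L)) :
    FStatConv f xs L := by
  intro ξ hξ
  obtain ⟨N, hN⟩ := Metric.tendsto_atTop.1 hx ξ hξ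
  have hcard : ∀ u, ((Icc 1 u).filter fun t => ξ ≤ ‖xs t - L‖).card ≤ N := fun u =>
    (card_le_card fun t ht => mem_range.2 <| by
      by_contra! htN
      have := hN t htN
      rw [dist_eq_norm] at this
      exact (mem_filter.1 ht).2.not_gt this).trans (card_range N).le
  have hf_top := hf.tendsto_atTop.comp tendsto_natCast_atTop_atTop
  obtain ⟨⟨hf_nonneg, -, -, hf_mono, -⟩, -⟩ := hf
  refine squeeze_zero (g := fun u : ℕ => f N / f u)
    (fun u => div_nonneg (hf_nonneg _ (Nat.cast_nonneg _)) (hf_nonneg _ u.cast_nonneg))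
    (fun u => div_le_div_of_nonneg_right (hf_mono _ _ (Nat.cast_nonneg _)
      (by exact_mod_cast hcard u)) (hf_nonneg _ u.cast_nonneg))
    (tendsto_const_nhds.div_atTop hf_top)

end FStatConv

theorem stmt17_general {X : Type*} [NormedAddCommGroup X]
    (xs : ℕ → X)
    (h : ∀ f : ℝ → ℝ, IsUnboundedModulus f → ∃ L : X, FStatConv f xs L) :
    ∃ x : X, (∀ f : ℝ → ℝ, IsUnboundedModulus f → FStatConv f xs x) ∧
      Tendsto xs atTop (nhds x) := by
  obtain ⟨L, hL⟩ := h id isUnboundedModulus_id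
  have hconv : Tendsto xs atTop (𝓝 L) := by
    by_contra hnot
    obtain ⟨ε, hε, hfreq⟩ : ∃ ε > 0, ∃ᶠ t in atTop, ε ≤ ‖xs t - L‖ := by
      simpa [Metric.tendsto_nhds, dist_eq_norm, Filter.not_eventually, frequently_atTop] using hnot
    obtain ⟨f, hf, hnot_f⟩ :=
      exists_isUnboundedModulus_not_tendsto_card (Nat.frequently_atTop_iff_infinite.1 hfreq)
    obtain ⟨L', hL'⟩ := h f hf
    obtain rfl : L' = L := (hL'.to_id hf.1).unique isUnboundedModulus_id.1 hL
    exact hnot_f (hL' ε hε)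
  exact ⟨L, fun f hf => .of_tendsto hf hconv, hconv⟩

theorem stmt17 {X : Type*} [NormedAddCommGroup X] [NormedSpace ℝ X]
    (xs : ℕ → X)
    (h : ∀ f : ℝ → ℝ, IsUnboundedModulus f → ∃ L : X, FStatConv f xs L) :
    ∃ x : X, (∀ f : ℝ → ℝ, IsUnboundedModulus f → FStatConv f xs x) ∧
      Tendsto xs atTop (nhds x) :=
  stmt17_general xs h
end
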